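/- If A and B are strong shift equivalent finite square non-negative integer matrices, then det(I - t·A) = det(I - t·B) as polynomials in t (i.e., strong shift equivalent matrices have the same zeta function). -/
import Mathlib


open Polynomial

/-- Elementary strong shift equivalence, as a relation on finite square
non-negative integer matrices of arbitrary sizes. -/
def ElemSSE (A B : Σ n : ℕ, Matrix (Fin n) (Fin n) ℕ) : Prop :=
  ∃ (R : Matrix (Fin A.1) (Fin B.1) ℕ) (S : Matrix (Fin B.1) (Fin A.1) ℕ),
    A.2 = R * S ∧ B.2 = S * R

/-- Strong shift equivalence: a finite chain of elementary strong shift equivalences. -/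
def SSE (A B : Σ n : ℕ, Matrix (Fin n) (Fin n) ℕ) : Prop :=
  Relation.ReflTransGen ElemSSE A B

lemma elem_step (A B : Σ n : ℕ, Matrix (Fin n) (Fin n) ℕ) (h : ElemSSE A B) :
    ((1 : Matrix (Fin A.1) (Fin A.1) ℤ[X]) -
        (X : ℤ[X]) • A.2.map (fun a => (a : ℤ[X]))).det =
      ((1 : Matrix (Fin B.1) (Fin B.1) ℤ[X]) -
        (X : ℤ[X]) • B.2.map (fun a => (a : ℤ[X]))).det := by
  obtain ⟨R, S, hA, hB⟩ := h
  have hmap : ∀ {m n k : ℕ} (M : Matrix (Fin m) (Fin n) ℕ) (N : Matrix (Fin n) (Fin k) ℕ),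
      (M * N).map (fun a => (a : ℤ[X])) =
        M.map (fun a => (a : ℤ[X])) * N.map (fun a => (a : ℤ[X])) := by
    intro m n k M N
    exact Matrix.map_mul (f := Nat.castRingHom ℤ[X])
  rw [hA, hB]
  rw [hmap, hmap]
  set R' := R.map (fun a => (a : ℤ[X]))
  set S' := S.map (fun a => (a : ℤ[X]))
  have h1 : (1 : Matrix (Fin A.1) (Fin A.1) ℤ[X]) - (X : ℤ[X]) • (R' * S')
      = 1 + (-((X : ℤ[X]) • R')) * S' := by
    rw [Matrix.neg_mul, Matrix.smul_mul]; rw [sub_eq_add_neg]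
  have h2 : (1 : Matrix (Fin B.1) (Fin B.1) ℤ[X]) - (X : ℤ[X]) • (S' * R')
      = 1 + S' * (-((X : ℤ[X]) • R')) := by
    rw [Matrix.mul_neg, Matrix.mul_smul]; rw [sub_eq_add_neg]
  rw [h1, h2, Matrix.det_one_add_mul_comm]

/-- Strong shift equivalent matrices have the same zeta function:
det(I - tA) = det(I - tB) in ℤ[t]. -/
theorem sse_det_one_sub_smul_eq (A B : Σ n : ℕ, Matrix (Fin n) (Fin n) ℕ) (h : SSE A B) :
    ((1 : Matrix (Fin A.1) (Fin A.1) ℤ[X]) -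
        (X : ℤ[X]) • A.2.map (fun a => (a : ℤ[X]))).det =
      ((1 : Matrix (Fin B.1) (Fin B.1) ℤ[X]) -
        (X : ℤ[X]) • B.2.map (fun a => (a : ℤ[X]))).det := by
  induction h with
  | refl => rfl
  | tail _ hstep ih => exact ih.trans (elem_step _ _ hstep)
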